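/- Distinct desired information property of capacity achieving ULDCs (Lemma 3, Property 2(b)): let N ≥ 2, K ≥ 1, and consider a universal locally decodable code (ULDC) with locality N, K source symbols of entropy L_w > 0, M coded symbols of entropy L_x, and symbol rate L_w/L_x = C*(N,K). Then for every k ∈ {1,…,K}, every decoding set S ∈ 𝒮_k, and every pair of distinct indices i₁, i₂ ∈ S, the coded symbols X_{i₁} and X_{i₂} contain distinct information about W_k: H(X_{i₁} | X_{i₂}, W_k̄) = H(X_{i₁} | W_k̄), where W_k̄ is the tuple of all source symbols other than W_k. -/

import Mathlib

open scoped BigOperators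

noncomputable section

/-- A finite probability space: a finite type together with a probability mass function. -/
structure FinProbSpace where
  Ω : Type
  [fin : Fintype Ω]
  p : Ω → ℝ
  nonneg : ∀ ω, 0 ≤ p ω
  sum_one : ∑ ω, p ω = 1

attribute [instance] FinProbSpace.fin

namespace FinProbSpace

variable (P : FinProbSpace)

/-- Probability that the random variable `X` takes the value `a`. -/
def prob {α : Type} [DecidableEq α] (X : P.Ω → α) (a : α) : ℝ :=
  ∑ ω, if X ω = a then P.p ω else 0

/-- Shannon entropy (in bits) of a finitely valued random variable. -/
def H {α : Type} [Fintype α] [DecidableEq α] (X : P.Ω → α) : ℝ :=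
  ∑ a, -(P.prob X a * Real.logb 2 (P.prob X a))

/-- Conditional Shannon entropy `H(X | Y) = H(X, Y) - H(Y)` (in bits). -/
def condH {α β : Type} [Fintype α] [DecidableEq α] [Fintype β] [DecidableEq β]
    (X : P.Ω → α) (Y : P.Ω → β) : ℝ :=
  P.H (fun ω => (X ω, Y ω)) - P.H Y

/-- The tuple random variable `(X_i)_{i ∈ ι}`. -/
def tuple {ι V : Type} (X : ι → P.Ω → V) : P.Ω → ι → V := fun ω i => X i ω

/-- Joint (mutual) independence of a finite family of random variables. -/
def iIndep {ι V : Type} [Fintype ι] [DecidableEq ι] [DecidableEq V] (X : ι → P.Ω → V) : Prop :=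
  ∀ a : ι → V, P.prob (P.tuple X) a = ∏ i, P.prob (X i) (a i)

/-- `X` and `Y` contain the same information about everything beyond `Z`:
`H(X | Y, Z) = H(Y | X, Z) = 0`. -/
def sameInfo {α β γ : Type} [Fintype α] [DecidableEq α] [Fintype β] [DecidableEq β]
    [Fintype γ] [DecidableEq γ] (X : P.Ω → α) (Y : P.Ω → β) (Z : P.Ω → γ) : Prop :=
  P.condH X (fun ω => (Y ω, Z ω)) = 0 ∧ P.condH Y (fun ω => (X ω, Z ω)) = 0

end FinProbSpace

/-- A locally decodable code with `K` source symbols of entropy `Lw`, `M` coded symbols of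
entropy `Lx`, and locality `N`. -/
structure LDC (K N M : ℕ) (Lw Lx : ℝ) where
  P : FinProbSpace
  V : Type
  [fV : Fintype V]
  [dV : DecidableEq V]
  V' : Type
  [fV' : Fintype V']
  [dV' : DecidableEq V']
  /-- the source symbols -/
  W : Fin K → P.Ω → V
  /-- the coded symbols -/
  X : Fin M → P.Ω → V'
  indep : P.iIndep W
  HW : ∀ k, P.H (W k) = Lw
  coded_fn : ∀ m, ∃ f : (Fin K → V) → V', ∀ ω, X m ω = f (fun k => W k ω)
  HX : ∀ m, P.H (X m) = Lx
  /-- the decoding supersets -/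
  decSets : Fin K → Finset (Finset (Fin M))
  decSets_nonempty : ∀ k, (decSets k).Nonempty
  decSets_card : ∀ k, ∀ s ∈ decSets k, s.card = N
  decodes : ∀ k, ∀ s ∈ decSets k,
    P.condH (W k) (P.tuple fun i : {x // x ∈ s} => X i.1) = 0

attribute [instance] LDC.fV LDC.dV LDC.fV' LDC.dV'

/-- A universal LDC: every coded symbol appears in some decoding set of every source symbol. -/
def LDC.IsUniversal {K N M : ℕ} {Lw Lx : ℝ} (C : LDC K N M Lw Lx) : Prop :=
  ∀ (m : Fin M) (k : Fin K), ∃ s ∈ C.decSets k, m ∈ s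

/-- A perfectly smooth LDC: for each source symbol, every coded symbol lies in the same
number of decoding sets. -/
def LDC.IsSmooth {K N M : ℕ} {Lw Lx : ℝ} (C : LDC K N M Lw Lx) : Prop :=
  ∀ (k : Fin K) (m m' : Fin M),
    ((C.decSets k).filter (fun s => m ∈ s)).card =
      ((C.decSets k).filter (fun s => m' ∈ s)).card

/-- `C*(N, K) = N (1 + 1/N + ⋯ + 1/N^{K-1})⁻¹`. -/
def Cstar (N K : ℕ) : ℝ := N / (∑ j ∈ Finset.range K, (1 / (N : ℝ)) ^ j)

/-- An `N`-query information retrieval scheme with `K` messages of entropy `Lw` and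
answer sets of sizes `Mn n` with answers of entropy `Lx`. -/
structure IRScheme (K N : ℕ) (Mn : Fin N → ℕ) (Lw Lx : ℝ) where
  P : FinProbSpace
  V : Type
  [fV : Fintype V]
  [dV : DecidableEq V]
  V' : Type
  [fV' : Fintype V']
  [dV' : DecidableEq V']
  /-- the messages -/
  W : Fin K → P.Ω → V
  /-- `A n m` is the `m`-th possible answer of database `n` -/
  A : (n : Fin N) → Fin (Mn n) → P.Ω → V'
  indep : P.iIndep W
  HW : ∀ k, P.H (W k) = Lw
  ans_fn : ∀ n m, ∃ f : (Fin K → V) → V', ∀ ω, A n m ω = f (fun k => W k ω)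
  HA : ∀ n m, P.H (A n m) = Lx
  /-- the decoding supersets: each decoding set consists of one answer index per database -/
  Q : Fin K → Finset ((n : Fin N) → Fin (Mn n))
  Q_nonempty : ∀ k, (Q k).Nonempty
  decodes : ∀ k, ∀ q ∈ Q k, P.condH (W k) (P.tuple fun n => A n (q n)) = 0

attribute [instance] IRScheme.fV IRScheme.dV IRScheme.fV' IRScheme.dV'

/-- A repudiative (RIR_max) scheme: every possible answer of every database appears in some
decoding set of every message. -/
def IRScheme.IsRIR {K N : ℕ} {Mn : Fin N → ℕ} {Lw Lx : ℝ} (C : IRScheme K N Mn Lw Lx) : Prop :=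
  ∀ (n : Fin N) (m : Fin (Mn n)) (k : Fin K), ∃ q ∈ C.Q k, q n = m

/-- A perfectly private (PIR_max) scheme: for each message there is a distribution on its
decoding sets such that the marginal distribution of the query to each database does not
depend on the message. -/
def IRScheme.IsPIR {K N : ℕ} {Mn : Fin N → ℕ} {Lw Lx : ℝ} (C : IRScheme K N Mn Lw Lx) : Prop :=
  ∃ μ : Fin K → ((n : Fin N) → Fin (Mn n)) → ℝ,
    (∀ k q, 0 ≤ μ k q) ∧ (∀ k, ∑ q ∈ C.Q k, μ k q = 1) ∧
    (∀ (k k' : Fin K) (n : Fin N) (m : Fin (Mn n)),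
      ∑ q ∈ (C.Q k).filter (fun q => q n = m), μ k q =
        ∑ q ∈ (C.Q k').filter (fun q => q n = m), μ k' q)

/-- `C_K(N) = (1 + 1/N + ⋯ + 1/N^{K-1})⁻¹`, the capacity of PIR. -/
def CK (N K : ℕ) : ℝ := (∑ j ∈ Finset.range K, (1 / (N : ℝ)) ^ j)⁻¹

/-!
Peel off the source symbols one at a time. If `X_m` lies in a decoding set `S'` of `W_a`, then
conditioning on `W_a` lowers `H(X_{S'} | W_T)` by `H(W_a | W_T) = L_w`, because `W_a` is a function
of `X_{S'}` that is independent of `W_T`; and `X_{S'}` carries at most `N` times the entropy of one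
coded symbol. By induction `H(X_m | W_T) ≤ L_x N^{|T|} - L_w (1 + N + ⋯ + N^{|T|-1})`, which for
`T = k̄` at the capacity rate is `L_w / N`. A decoding set `S` of `W_k` must carry
`H(X_S | W_k̄) ≥ L_w` with only `N` symbols of at most `L_w / N` each, so all these bounds are
tight: `X_{i₁}` keeps its full `L_w / N` bits even given `X_{i₂}`.
-/

open Finset Real

lemma Real.mul_log_le_mul_log {p q : ℝ} (hp : 0 ≤ p) (hpq : p ≤ q) :
    p * log p ≤ p * log q := by
  rcases hp.eq_or_lt with rfl | hp
  · simp
  · exact mul_le_mul_of_nonneg_left (log_le_log hp hpq) hp.le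

lemma Real.negMulLog_add_mul_log_le {p r : ℝ} (hp : 0 ≤ p) (hr : 0 ≤ r)
    (hpr : 0 < p → 0 < r) : negMulLog p + p * log r ≤ r - p := by
  rcases hp.eq_or_lt with rfl | hp
  · simpa using hr
  · have hr := hpr hp
    calc negMulLog p + p * log r = p * log (r / p) := by
          rw [negMulLog, log_div hr.ne' hp.ne']
          ring
      _ ≤ p * (r / p - 1) :=
          mul_le_mul_of_nonneg_left (log_le_sub_one_of_pos (by positivity)) hp.le
      _ = r - p := by field_simp

lemma Real.negMulLog_add_mul_log_sub_le {q x y z : ℝ} (hq : 0 ≤ q) (hx : q ≤ x) (hy : q ≤ y)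
    (hz : q ≤ z) : negMulLog q + q * log x + q * log y - q * log z ≤ x * y / z - q := by
  rcases hq.eq_or_lt with rfl | hq
  · simp only [negMulLog_zero, zero_mul, add_zero, sub_zero, sub_self]
    exact div_nonneg (mul_nonneg hx hy) hz
  · have hx := hq.trans_le hx
    have hy := hq.trans_le hy
    have hz := hq.trans_le hz
    calc _ = negMulLog q + q * log (x * y / z) := by
          rw [log_div (by positivity) hz.ne', log_mul hx.ne' hy.ne']
          ring
      _ ≤ _ := negMulLog_add_mul_log_le hq.le (by positivity) fun _ => by positivity

def Determines {Ω α β : Type*} (X : Ω → α) (Y : Ω → β) : Prop :=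
  ∃ f : α → β, ∀ ω, Y ω = f (X ω)

namespace Determines

variable {Ω α β γ : Type*} {X : Ω → α} {Y : Ω → β} {Z : Ω → γ}

lemma refl (X : Ω → α) : Determines X X := ⟨id, fun _ => rfl⟩

lemma trans (hXY : Determines X Y) (hYZ : Determines Y Z) : Determines X Z := by
  obtain ⟨f, hf⟩ := hXY
  obtain ⟨g, hg⟩ := hYZ
  exact ⟨g ∘ f, fun ω => by rw [hg, hf]; rfl⟩

lemma fst (X : Ω → α) (Y : Ω → β) : Determines (fun ω => (X ω, Y ω)) X :=
  ⟨Prod.fst, fun _ => rfl⟩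

lemma snd (X : Ω → α) (Y : Ω → β) : Determines (fun ω => (X ω, Y ω)) Y :=
  ⟨Prod.snd, fun _ => rfl⟩

lemma prodMk (hY : Determines X Y) (hZ : Determines X Z) :
    Determines X (fun ω => (Y ω, Z ω)) := by
  obtain ⟨f, hf⟩ := hY
  obtain ⟨g, hg⟩ := hZ
  exact ⟨fun a => (f a, g a), fun ω => by simp only [hf, hg]⟩

lemma prodMap {α' β' : Type*} {X' : Ω → α'} {Y' : Ω → β'}
    (hX : Determines X X') (hY : Determines Y Y') :
    Determines (fun ω => (X ω, Y ω)) (fun ω => (X' ω, Y' ω)) :=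
  ((fst X Y).trans hX).prodMk ((snd X Y).trans hY)

end Determines

def subtuple {Ω ι V : Type*} (s : Finset ι) (X : ι → Ω → V) : Ω → s → V :=
  fun ω i => X i ω

section Subtuple

variable {Ω ι V : Type*} {s t : Finset ι} {X : ι → Ω → V}

lemma determines_subtuple_of_subset (h : t ⊆ s) : Determines (subtuple s X) (subtuple t X) :=
  ⟨fun u i => u ⟨i, h i.2⟩, fun _ => rfl⟩

lemma determines_subtuple_apply {i : ι} (h : i ∈ s) : Determines (subtuple s X) (X i) :=
  ⟨fun u => u ⟨i, h⟩, fun _ => rfl⟩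

lemma determines_subtuple_insert_pair (a : ι) [DecidableEq ι] :
    Determines (subtuple (insert a s) X) (fun ω => (X a ω, subtuple s X ω)) :=
  (determines_subtuple_apply (mem_insert_self a s)).prodMk
    (determines_subtuple_of_subset (subset_insert a s))

lemma determines_pair_subtuple_insert (a : ι) [DecidableEq ι] :
    Determines (fun ω => (X a ω, subtuple s X ω)) (subtuple (insert a s) X) := by
  refine ⟨fun p i => if h : i.1 = a then p.1 else p.2 ⟨i, (mem_insert.1 i.2).resolve_left h⟩,
    fun ω => funext fun i => ?_⟩
  by_cases h : i.1 = a <;> simp [subtuple, h]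

end Subtuple

namespace FinProbSpace

variable (P : FinProbSpace) {α α' β β' γ ι V : Type} [DecidableEq α] [DecidableEq α']
  [DecidableEq β] [DecidableEq β'] [DecidableEq γ] [DecidableEq ι] [DecidableEq V]

lemma prob_nonneg (X : P.Ω → α) (a : α) : 0 ≤ P.prob X a :=
  sum_nonneg fun ω _ => by split_ifs <;> simp [P.nonneg ω]

lemma prob_comp [Fintype α] (f : α → β) (X : P.Ω → α) (b : β) :
    P.prob (fun ω => f (X ω)) b = ∑ a with f a = b, P.prob X a := by
  unfold prob
  rw [sum_comm]
  refine sum_congr rfl fun ω _ => ?_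
  rw [sum_filter, sum_eq_single (X ω) (fun a _ ha => by simp [Ne.symm ha]) (by simp)]
  simp

lemma prob_le_prob_comp [Fintype α] (f : α → β) (X : P.Ω → α) (a : α) :
    P.prob X a ≤ P.prob (fun ω => f (X ω)) (f a) := by
  rw [P.prob_comp f X]
  exact single_le_sum (fun a' _ => P.prob_nonneg X a') (by simp)

lemma sum_prob [Fintype α] (X : P.Ω → α) : ∑ a, P.prob X a = 1 := by
  unfold prob
  rw [sum_comm]
  simp [P.sum_one]

lemma sum_prob_pair [Fintype α] (X : P.Ω → α) (Y : P.Ω → β) (b : β) :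
    ∑ a, P.prob (fun ω => (X ω, Y ω)) (a, b) = P.prob Y b := by
  unfold prob
  rw [sum_comm]
  refine sum_congr rfl fun ω _ => ?_
  simp [Prod.ext_iff, ite_and]

lemma sum_prob_comp_mul [Fintype α] [Fintype β] (f : α → β) (X : P.Ω → α)
    (g : β → ℝ) :
    ∑ b, P.prob (fun ω => f (X ω)) b * g b = ∑ a, P.prob X a * g (f a) := by
  rw [← sum_fiberwise univ f fun a => P.prob X a * g (f a)]
  refine sum_congr rfl fun b _ => ?_
  rw [P.prob_comp f X, sum_mul]
  exact sum_congr rfl fun a ha => by rw [(mem_filter.1 ha).2]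

lemma nonempty_Ω : Nonempty P.Ω := by
  by_contra h
  simpa [univ_eq_empty_iff.2 (not_nonempty_iff.1 h)] using P.sum_one

section

variable [Fintype α] [Fintype α'] [Fintype β] [Fintype β'] [Fintype γ] [Fintype V]

lemma H_eq_sum_negMulLog (X : P.Ω → α) :
    P.H X = (∑ a, negMulLog (P.prob X a)) / log 2 := by
  rw [H, sum_div]
  refine sum_congr rfl fun a _ => ?_
  rw [negMulLog, logb]
  ring

lemma sum_negMulLog_prob_comp (f : α → β) (X : P.Ω → α) :
    ∑ b, negMulLog (P.prob (fun ω => f (X ω)) b) =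
      -∑ a, P.prob X a * log (P.prob (fun ω => f (X ω)) (f a)) := by
  simp only [negMulLog, neg_mul, sum_neg_distrib]
  rw [P.sum_prob_comp_mul f X fun b => log (P.prob (fun ω => f (X ω)) b)]

lemma H_comp_le (f : α → β) (X : P.Ω → α) : P.H (fun ω => f (X ω)) ≤ P.H X := by
  rw [H_eq_sum_negMulLog, H_eq_sum_negMulLog, sum_negMulLog_prob_comp]
  gcongr
  simp only [negMulLog, neg_mul, sum_neg_distrib, neg_le_neg_iff]
  exact sum_le_sum fun a _ =>
    mul_log_le_mul_log (P.prob_nonneg X a) (P.prob_le_prob_comp f X a)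

variable {P} in
lemma H_le_of_determines {X : P.Ω → α} {Y : P.Ω → β} (h : Determines X Y) :
    P.H Y ≤ P.H X := by
  obtain ⟨f, hf⟩ := h
  rw [show Y = fun ω => f (X ω) from funext hf]
  exact P.H_comp_le f X

lemma H_congr {X : P.Ω → α} {Y : P.Ω → β} (hXY : Determines X Y) (hYX : Determines Y X) :
    P.H X = P.H Y :=
  le_antisymm (H_le_of_determines hYX) (H_le_of_determines hXY)

lemma H_eq_zero_of_subsingleton [Subsingleton α] (X : P.Ω → α) : P.H X = 0 := by
  have hprob : ∀ a, P.prob X a = 1 := fun a => by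
    simp only [prob, Subsingleton.elim _ a, if_true, P.sum_one]
  simp [H_eq_sum_negMulLog, hprob]

lemma sum_prob_pair_mul_prob_pair_div (X : P.Ω → α) (Y : P.Ω → β) (Z : P.Ω → γ) :
    ∑ t : α × β × γ, P.prob (fun ω => (X ω, Z ω)) (t.1, t.2.2) *
      P.prob (fun ω => (Y ω, Z ω)) t.2 / P.prob Z t.2.2 = 1 := by
  calc _ = ∑ c, (∑ a, P.prob (fun ω => (X ω, Z ω)) (a, c)) *
        (∑ b, P.prob (fun ω => (Y ω, Z ω)) (b, c)) / P.prob Z c := by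
        simp only [Fintype.sum_prod_type, Fintype.sum_mul_sum, sum_div]
        conv_rhs => rw [sum_comm]
        exact sum_congr rfl fun _ _ => sum_comm
    _ = 1 := by simp only [sum_prob_pair, mul_self_div_self, sum_prob]

/-- Gibbs' inequality against `r(a,b,c) = p(a,c) p(b,c) / p(c)`, whose total mass is `1`. -/
lemma H_submodular (X : P.Ω → α) (Y : P.Ω → β) (Z : P.Ω → γ) :
    P.H (fun ω => (X ω, (Y ω, Z ω))) + P.H Z ≤
      P.H (fun ω => (X ω, Z ω)) + P.H (fun ω => (Y ω, Z ω)) := by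
  have hXZ := P.sum_negMulLog_prob_comp (fun t : α × β × γ => (t.1, t.2.2))
    (fun ω => (X ω, (Y ω, Z ω)))
  have hYZ := P.sum_negMulLog_prob_comp (Prod.snd : α × β × γ → β × γ)
    (fun ω => (X ω, (Y ω, Z ω)))
  have hZ := P.sum_negMulLog_prob_comp (fun t : α × β × γ => t.2.2)
    (fun ω => (X ω, (Y ω, Z ω)))
  have hgibbs := sum_le_sum fun t (_ : t ∈ univ) =>
    negMulLog_add_mul_log_sub_le (P.prob_nonneg _ t)
      (P.prob_le_prob_comp (fun t : α × β × γ => (t.1, t.2.2))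
        (fun ω => (X ω, (Y ω, Z ω))) t)
      (P.prob_le_prob_comp Prod.snd (fun ω => (X ω, (Y ω, Z ω))) t)
      (P.prob_le_prob_comp (fun t : α × β × γ => t.2.2) (fun ω => (X ω, (Y ω, Z ω))) t)
  dsimp only at hXZ hYZ hZ hgibbs
  eta_reduce at hZ hgibbs
  simp only [sum_add_distrib, sum_sub_distrib, sum_prob] at hgibbs
  have hmass := P.sum_prob_pair_mul_prob_pair_div X Y Z
  simp only [H_eq_sum_negMulLog, ← add_div]
  rw [div_le_div_iff_of_pos_right (log_pos one_lt_two)]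
  linarith

lemma H_tuple_of_iIndep [Fintype ι] (W : ι → P.Ω → V) (hW : P.iIndep W) :
    P.H (P.tuple W) = ∑ i, P.H (W i) := by
  have hpoint : ∀ a, negMulLog (P.prob (P.tuple W) a) =
      ∑ i, P.prob (P.tuple W) a * -log (P.prob (W i) (a i)) := fun a => by
    rcases eq_or_ne (P.prob (P.tuple W) a) 0 with h | h
    · simp [h]
    rw [hW a] at h ⊢
    rw [← mul_sum, sum_neg_distrib, negMulLog,
      log_prod fun i _ => prod_ne_zero_iff.1 h i (mem_univ i), neg_mul, mul_neg]
  have hmarg : ∀ i, ∑ a, P.prob (P.tuple W) a * -log (P.prob (W i) (a i)) =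
      ∑ v, negMulLog (P.prob (W i) v) := fun i => by
    have := P.sum_prob_comp_mul (fun a : ι → V => a i) (P.tuple W) fun v => -log (P.prob (W i) v)
    simp only [negMulLog, neg_mul, ← mul_neg]
    exact this.symm
  simp only [H_eq_sum_negMulLog, ← sum_div, hpoint]
  rw [sum_comm]
  simp only [hmarg]

lemma condH_nonneg (X : P.Ω → α) (Y : P.Ω → β) : 0 ≤ P.condH X Y :=
  sub_nonneg.2 (H_le_of_determines (Determines.snd X Y))

lemma condH_eq_zero_of_determines {X : P.Ω → α} {Y : P.Ω → γ} (h : Determines Y X) :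
    P.condH X Y = 0 := by
  rw [condH, P.H_congr (Determines.snd X Y) (h.prodMk (.refl Y)), sub_self]

variable {P} in
lemma condH_congr {X : P.Ω → α} {X' : P.Ω → α'} {Y : P.Ω → β} {Y' : P.Ω → β'}
    (hX : Determines X X') (hX' : Determines X' X) (hY : Determines Y Y')
    (hY' : Determines Y' Y) : P.condH X Y = P.condH X' Y' := by
  rw [condH, condH, P.H_congr (hX.prodMap hY) (hX'.prodMap hY'), P.H_congr hY hY']

lemma condH_eq_H_of_subsingleton [Subsingleton β] (X : P.Ω → α) (Y : P.Ω → β) :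
    P.condH X Y = P.H X := by
  obtain ⟨ω₀⟩ := P.nonempty_Ω
  rw [condH, P.H_eq_zero_of_subsingleton Y, sub_zero]
  exact P.H_congr (Determines.fst X Y)
    ((Determines.refl X).prodMk ⟨fun _ => Y ω₀, fun _ => Subsingleton.elim _ _⟩)

lemma condH_chain (X : P.Ω → α) (Y : P.Ω → β) (Z : P.Ω → γ) :
    P.condH (fun ω => (X ω, Y ω)) Z = P.condH X (fun ω => (Y ω, Z ω)) + P.condH Y Z := by
  have hassoc : P.H (fun ω => ((X ω, Y ω), Z ω)) = P.H (fun ω => (X ω, (Y ω, Z ω))) :=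
    P.H_congr ⟨fun p => (p.1.1, (p.1.2, p.2)), fun _ => rfl⟩
      ⟨fun p => ((p.1, p.2.1), p.2.2), fun _ => rfl⟩
  rw [condH, condH, condH, hassoc]
  ring

lemma condH_pair_le (X : P.Ω → α) (Y : P.Ω → β) (Z : P.Ω → γ) :
    P.condH X (fun ω => (Y ω, Z ω)) ≤ P.condH X Z := by
  have := P.H_submodular X Y Z
  unfold condH
  linarith

variable {P} in
lemma condH_le_of_determines_right (X : P.Ω → α) {Y : P.Ω → β} {Y' : P.Ω → β'}
    (h : Determines Y Y') : P.condH X Y ≤ P.condH X Y' :=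
  calc P.condH X Y = P.condH X (fun ω => (Y ω, Y' ω)) :=
        condH_congr (.refl X) (.refl X) ((Determines.refl Y).prodMk h) (.fst Y Y')
    _ ≤ P.condH X Y' := P.condH_pair_le X Y Y'

variable {P} in
lemma condH_le_of_determines_left {X : P.Ω → α} {X' : P.Ω → α'} (h : Determines X X')
    (Z : P.Ω → γ) : P.condH X' Z ≤ P.condH X Z :=
  calc P.condH X' Z ≤ P.condH X (fun ω => (X' ω, Z ω)) + P.condH X' Z :=
        le_add_of_nonneg_left (P.condH_nonneg _ _)
    _ = P.condH X Z := by
        rw [← condH_chain]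
        exact condH_congr (.fst X X') ((Determines.refl X).prodMk h) (.refl Z) (.refl Z)

lemma condH_pair_eq_sub_of_condH_eq_zero {A : P.Ω → α} {B : P.Ω → β} (hAB : P.condH A B = 0)
    (Z : P.Ω → γ) : P.condH B (fun ω => (A ω, Z ω)) = P.condH B Z - P.condH A Z := by
  have hABZ : P.condH A (fun ω => (B ω, Z ω)) = 0 :=
    le_antisymm (hAB ▸ condH_le_of_determines_right A (.fst B Z)) (P.condH_nonneg _ _)
  have hswap : P.condH (fun ω => (B ω, A ω)) Z = P.condH (fun ω => (A ω, B ω)) Z :=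
    condH_congr ⟨Prod.swap, fun _ => rfl⟩ ⟨Prod.swap, fun _ => rfl⟩ (.refl Z) (.refl Z)
  have := P.condH_chain B A Z
  rw [hswap, condH_chain, hABZ] at this
  linarith

lemma condH_subtuple_insert (X : ι → P.Ω → V) (Z : P.Ω → γ) (a : ι) (s : Finset ι) :
    P.condH (subtuple (insert a s) X) Z = P.condH (fun ω => (X a ω, subtuple s X ω)) Z :=
  condH_congr (determines_subtuple_insert_pair a) (determines_pair_subtuple_insert a)
    (.refl Z) (.refl Z)

lemma condH_subtuple_insert_right (A : P.Ω → α) (X : ι → P.Ω → V) (a : ι)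
    (s : Finset ι) :
    P.condH A (subtuple (insert a s) X) = P.condH A (fun ω => (X a ω, subtuple s X ω)) :=
  condH_congr (.refl A) (.refl A) (determines_subtuple_insert_pair a)
    (determines_pair_subtuple_insert a)

lemma condH_subtuple_le_sum (X : ι → P.Ω → V) (Z : P.Ω → γ) (s : Finset ι) :
    P.condH (subtuple s X) Z ≤ ∑ i ∈ s, P.condH (X i) Z := by
  induction s using Finset.induction_on with
  | empty =>
    have hconst : Determines Z (subtuple ∅ X) := ⟨fun _ i => absurd i.2 (notMem_empty i.1),
      fun _ => funext fun i => absurd i.2 (notMem_empty i.1)⟩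
    rw [sum_empty, P.condH_eq_zero_of_determines hconst]
  | insert a s ha ih =>
    rw [condH_subtuple_insert, condH_chain, sum_insert ha]
    exact add_le_add (P.condH_pair_le _ _ _) ih

lemma condH_subtuple_le_condH_pair_add_sum (X : ι → P.Ω → V) (Z : P.Ω → γ) {s : Finset ι}
    {i₁ i₂ : ι} (h₁ : i₁ ∈ s) (h₂ : i₂ ∈ s) (hne : i₁ ≠ i₂) :
    P.condH (subtuple s X) Z ≤
      P.condH (X i₁) (fun ω => (X i₂ ω, Z ω)) + ∑ i ∈ s.erase i₁, P.condH (X i) Z := by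
  calc P.condH (subtuple s X) Z = P.condH (subtuple (insert i₁ (s.erase i₁)) X) Z := by
        rw [insert_erase h₁]
    _ = P.condH (X i₁) (fun ω => (subtuple (s.erase i₁) X ω, Z ω)) +
          P.condH (subtuple (s.erase i₁) X) Z := by
        rw [condH_subtuple_insert, condH_chain]
    _ ≤ _ := add_le_add (condH_le_of_determines_right _
          ((determines_subtuple_apply (mem_erase.2 ⟨hne.symm, h₂⟩)).prodMap (.refl Z)))
          (P.condH_subtuple_le_sum X Z _)

lemma H_le_condH_of_iIndep [Fintype ι] {W : ι → P.Ω → V} (hW : P.iIndep W) {k : ι}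
    {T : Finset ι} (hk : k ∉ T) : P.H (W k) ≤ P.condH (W k) (subtuple T W) := by
  have hsub : P.H (subtuple {k}ᶜ W) ≤ ∑ i ∈ {k}ᶜ, P.H (W i) := by
    simpa only [condH_eq_H_of_subsingleton] using P.condH_subtuple_le_sum W (fun _ => ()) {k}ᶜ
  have htuple : P.H (P.tuple W) = P.H (fun ω => (W k ω, subtuple {k}ᶜ W ω)) := by
    rw [← P.H_congr (determines_subtuple_insert_pair k) (determines_pair_subtuple_insert k),
      insert_compl_self]
    exact P.H_congr ⟨fun a i => a i, fun _ => rfl⟩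
      ⟨fun a i => a ⟨i, mem_univ i⟩, fun _ => rfl⟩
  calc P.H (W k) ≤ P.condH (W k) (subtuple {k}ᶜ W) := by
        rw [condH, ← htuple, P.H_tuple_of_iIndep W hW, Fintype.sum_eq_add_sum_compl k]
        linarith
    _ ≤ P.condH (W k) (subtuple T W) := condH_le_of_determines_right _
        (determines_subtuple_of_subset fun i hi =>
          mem_compl.2 fun h => hk (mem_singleton.1 h ▸ hi))

end

end FinProbSpace

lemma geom_sum_one_div_mul_pow {F : Type*} [Field F] {x : F} (hx : x ≠ 0) (n : ℕ) :
    (∑ j ∈ range (n + 1), (1 / x) ^ j) * x ^ n = ∑ i ∈ range (n + 1), x ^ i := by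
  induction n with
  | zero => simp
  | succ n ih =>
    rw [geom_sum_succ, geom_sum_succ' (n := n + 1), ← ih]
    field_simp
    ring

lemma pow_mul_sub_geom_sum_of_eq_Cstar {N K : ℕ} {Lw Lx : ℝ} (hN : 0 < N)
    (hcap : Lw / Lx = Cstar N (K + 1)) :
    Lx * N ^ K - Lw * ∑ i ∈ range K, (N : ℝ) ^ i = Lw / N := by
  have hN' : (N : ℝ) ≠ 0 := by positivity
  have hG : 0 < ∑ j ∈ range (K + 1), (1 / (N : ℝ)) ^ j :=
    sum_pos (fun j _ => by positivity) nonempty_range_add_one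
  have hLx : Lx ≠ 0 := by
    rintro rfl
    rw [div_zero, Cstar] at hcap
    exact (div_pos (by positivity) hG).ne hcap
  rw [Cstar, div_eq_div_iff hLx hG.ne'] at hcap
  have hgeom := geom_sum_one_div_mul_pow hN' K
  rw [geom_sum_succ (x := (N : ℝ))] at hgeom
  rw [eq_div_iff hN']
  linear_combination (-(N : ℝ) ^ K) * hcap + Lw * hgeom

namespace LDC

variable {K N M : ℕ} {Lw Lx : ℝ} (C : LDC K N M Lw Lx)

lemma condH_subtuple_insert_le {a : Fin K} {S : Finset (Fin M)} (hS : S ∈ C.decSets a)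
    {T : Finset (Fin K)} (ha : a ∉ T) :
    C.P.condH (subtuple S C.X) (subtuple (insert a T) C.W) ≤
      C.P.condH (subtuple S C.X) (subtuple T C.W) - Lw := by
  have hdecode : C.P.condH (C.W a) (subtuple S C.X) = 0 := C.decodes a S hS
  rw [C.P.condH_subtuple_insert_right, C.P.condH_pair_eq_sub_of_condH_eq_zero hdecode]
  linarith [C.P.H_le_condH_of_iIndep C.indep ha, C.HW a]

lemma condH_X_le_of_isUniversal (hU : C.IsUniversal) (T : Finset (Fin K)) (m : Fin M) :
    C.P.condH (C.X m) (subtuple T C.W) ≤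
      Lx * N ^ T.card - Lw * ∑ i ∈ range T.card, (N : ℝ) ^ i := by
  induction T using Finset.induction_on generalizing m with
  | empty => simp [C.P.condH_eq_H_of_subsingleton, C.HX]
  | insert a T ha ih =>
    obtain ⟨S, hS, hm⟩ := hU m a
    calc C.P.condH (C.X m) (subtuple (insert a T) C.W)
        ≤ C.P.condH (subtuple S C.X) (subtuple (insert a T) C.W) :=
          FinProbSpace.condH_le_of_determines_left (determines_subtuple_apply hm) _
      _ ≤ ∑ i ∈ S, C.P.condH (C.X i) (subtuple T C.W) - Lw :=
          (C.condH_subtuple_insert_le hS ha).trans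
            (by gcongr; exact C.P.condH_subtuple_le_sum _ _ S)
      _ ≤ N * (Lx * N ^ T.card - Lw * ∑ i ∈ range T.card, (N : ℝ) ^ i) - Lw := by
          gcongr
          simpa [C.decSets_card a S hS] using sum_le_card_nsmul S _ _ fun i _ => ih i
      _ = _ := by
          rw [card_insert_of_notMem ha, geom_sum_succ, pow_succ]
          ring

end LDC

theorem uldc_distinct_information_general (K N M : ℕ) (Lw Lx : ℝ)
    (C : LDC K N M Lw Lx) (hU : C.IsUniversal)
    (hcap : Lw / Lx = Cstar N K)
    (k : Fin K) (S : Finset (Fin M)) (hS : S ∈ C.decSets k)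
    (i₁ i₂ : Fin M) (h₁ : i₁ ∈ S) (h₂ : i₂ ∈ S) (hne : i₁ ≠ i₂) :
    C.P.condH (C.X i₁)
      (fun ω => (C.X i₂ ω,
        (C.P.tuple fun j : {x // x ∈ ({k}ᶜ : Finset (Fin K))} => C.W j.1) ω)) =
    C.P.condH (C.X i₁)
      (C.P.tuple fun j : {x // x ∈ ({k}ᶜ : Finset (Fin K))} => C.W j.1) := by
  change C.P.condH _ (fun ω => (_, subtuple {k}ᶜ C.W ω)) = C.P.condH _ (subtuple {k}ᶜ C.W)
  have hN : 0 < N := C.decSets_card k S hS ▸ card_pos.2 ⟨i₁, h₁⟩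
  obtain ⟨K, rfl⟩ := Nat.exists_eq_add_one_of_ne_zero k.pos.ne'
  have hbound : ∀ i, C.P.condH (C.X i) (subtuple {k}ᶜ C.W) ≤ Lw / N := fun i => by
    simpa [card_compl, pow_mul_sub_geom_sum_of_eq_Cstar hN hcap] using
      C.condH_X_le_of_isUniversal hU {k}ᶜ i
  have hdecode : Lw ≤ C.P.condH (subtuple S C.X) (subtuple {k}ᶜ C.W) := by
    linarith [C.condH_subtuple_insert_le hS (notMem_compl.2 (mem_singleton_self k)),
      C.P.condH_nonneg (subtuple S C.X) (subtuple (insert k {k}ᶜ) C.W)]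
  have hrest :
      ∑ i ∈ S.erase i₁, C.P.condH (C.X i) (subtuple {k}ᶜ C.W) ≤ (N - 1) * (Lw / N) := by
    have := sum_le_card_nsmul _ _ _ fun i (_ : i ∈ S.erase i₁) => hbound i
    rwa [card_erase_of_mem h₁, C.decSets_card k S hS, nsmul_eq_mul, Nat.cast_sub hN,
      Nat.cast_one] at this
  have hsplit := C.P.condH_subtuple_le_condH_pair_add_sum C.X (subtuple {k}ᶜ C.W) h₁ h₂ hne
  have hrate : (N - 1) * (Lw / N) = Lw - Lw / N := by field_simp
  exact le_antisymm (C.P.condH_pair_le _ _ _) (by linarith [hbound i₁])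

/-- Distinct desired information property, Lemma 3, Property 2(b): in a
capacity achieving ULDC, for every decoding set `S ∈ 𝒮_k` and distinct `i₁, i₂ ∈ S`,
`H(X_{i₁} | X_{i₂}, W_k̄) = H(X_{i₁} | W_k̄)`. -/
theorem uldc_distinct_information (K N M : ℕ) (hK : 1 ≤ K) (hN : 2 ≤ N) (Lw Lx : ℝ)
    (hLw : 0 < Lw) (C : LDC K N M Lw Lx) (hU : C.IsUniversal)
    (hcap : Lw / Lx = Cstar N K)
    (k : Fin K) (S : Finset (Fin M)) (hS : S ∈ C.decSets k)
    (i₁ i₂ : Fin M) (h₁ : i₁ ∈ S) (h₂ : i₂ ∈ S) (hne : i₁ ≠ i₂) :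
    C.P.condH (C.X i₁)
      (fun ω => (C.X i₂ ω,
        (C.P.tuple fun j : {x // x ∈ ({k}ᶜ : Finset (Fin K))} => C.W j.1) ω)) =
    C.P.condH (C.X i₁)
      (C.P.tuple fun j : {x // x ∈ ({k}ᶜ : Finset (Fin K))} => C.W j.1) :=
  uldc_distinct_information_general K N M Lw Lx C hU hcap k S hS i₁ i₂ h₁ h₂ hne
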